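/- arXiv:2505.02614 — 2 statements merged into one kernel-verified Lean document; each statement's English description precedes it below -/
import Mathlib

section
/- (Convergence of Hadamard descent+) Let A ∈ ℝ^{m×n} with A ≠ 0 and b ∈ ℝ^m be such that S₊ is nonempty, and let f(x) = (1/2)‖Ax − b‖₂². Let x₀ ∈ ℝ^n_{++} and define recursively x_{k+1} = x_k ∘ ( 1 − α_k ∇f(x_k) + α_k² ∇f(x_k)² ) (componentwise), with α_k = min{ f(x_k)/‖∇f(x_k)‖²_{x_k} , 1.79/‖∇f(x_k)‖_∞ }, assuming ∇f(x_k) ≠ 0 for all k. Then (x_k) converges to some x* ∈ S₊, and for every k ∈ ℕ, min_{0≤i≤k} f(x_i) ≤ 4·R·(R + ‖x*‖₁)·C_A² / (k+1), where R = D_h(x*, x₀) and C_A = max_{1≤j≤n} ‖A_{:j}‖₂ is the maximum Euclidean column norm of A. -/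
open Finset Filter

/-- Bregman divergence generated by the negative entropy
`h(x) = ∑ i, x i * (log (x i) - 1)` (with the convention `0 * log 0 = 0`,
which holds automatically since `Real.log 0 = 0`). -/
noncomputable def Dh {n : ℕ} (x y : Fin n → ℝ) : ℝ :=
  ∑ i, (x i * Real.log (x i / y i) - x i + y i)

/-- ℓ₁-norm of a vector. -/
noncomputable def l1 {n : ℕ} (x : Fin n → ℝ) : ℝ := ∑ i, |x i|

/-- Objective `f(x) = (1/2) ‖Ax - b‖₂²`. -/
noncomputable def fobj {m n : ℕ} (A : Matrix (Fin m) (Fin n) ℝ) (b : Fin m → ℝ)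
    (x : Fin n → ℝ) : ℝ := (1 / 2) * ∑ j, ((A.mulVec x - b) j) ^ 2

/-- Gradient `∇f(x) = Aᵀ (Ax - b)` of `f(x) = (1/2)‖Ax - b‖₂²`. -/
noncomputable def gradf {m n : ℕ} (A : Matrix (Fin m) (Fin n) ℝ) (b : Fin m → ℝ)
    (x : Fin n → ℝ) : Fin n → ℝ := A.transpose.mulVec (A.mulVec x - b)

/-- Maximum norm `‖v‖_∞`. -/
noncomputable def linfty {n : ℕ} [NeZero n] (v : Fin n → ℝ) : ℝ :=
  Finset.univ.sup' Finset.univ_nonempty fun i => |v i|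

/-- Weighted squared norm `‖v‖²_x = ∑ i, x i * (v i)²`. -/
noncomputable def wnormSq {n : ℕ} (x v : Fin n → ℝ) : ℝ := ∑ i, x i * (v i) ^ 2

/-- The Polyak-type stepsize `min { f(x)/‖∇f(x)‖²_x , 1.79/‖∇f(x)‖_∞ }`. -/
noncomputable def polyakStep {m n : ℕ} [NeZero n] (A : Matrix (Fin m) (Fin n) ℝ)
    (b : Fin m → ℝ) (x : Fin n → ℝ) : ℝ :=
  min (fobj A b x / wnormSq x (gradf A b x)) (1.79 / linfty (gradf A b x))

/-- Maximum Euclidean column norm `C_A = max_j ‖A_{:j}‖₂`. -/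
noncomputable def colNormMax {m n : ℕ} [NeZero n] (A : Matrix (Fin m) (Fin n) ℝ) : ℝ :=
  Finset.univ.sup' Finset.univ_nonempty fun j => Real.sqrt (∑ i, (A i j) ^ 2)

/-!
For `z ∈ S₊`, the divergence `D_h(z, ·)` decreases by at least `α f(x)` along each step.
Writing `t = α ∇f(x)`, the step multiplies `x` by `1 - t + t²`, and `log (1 - t + t²) ≥ -t` as long
as `t ≥ -1.79`, which the cap `1.79 / ‖∇f(x)‖_∞` on the stepsize guarantees; together with
`⟨∇f(x), x - z⟩ = 2 f(x)` and `α ‖∇f(x)‖²_x ≤ f(x)` this gives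
`D_h(z, x⁺) ≤ D_h(z, x) - α f(x)`. Hence `∑ α_k f(x_k) ≤ D_h(z, x₀)`, and the iterates stay in the
box `∑ x_k ≤ M := 2 (D_h(z, x₀) + ‖z‖₁)`. Whichever term of the `min` is active,
`f ≤ 2 C_A² max (M α f, (α f)²)`; this yields both `f(x_k) → 0` and, for the `k` with smallest
`α_k f(x_k)`, the rate. A limit point `x*` of the bounded iterates lies in `S₊`;
since `D_h(x*, x_k)` is nonincreasing and tends to `0` along a subsequence, it tends to `0`, and
`(√a - √y)² ≤ a log (a / y) - a + y` turns this into `x_k → x*`.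
-/

open Real Topology Matrix

-- `exp 1.79 = e² / exp 0.21`, with the cubic Taylor lower bound for `exp 0.21`.
theorem exp_one_point_seven_nine_le : exp 1.79 ≤ 1 + 1.79 + 1.79 ^ 2 := by
  have h021 : ∑ i ∈ range 4, (0.21 : ℝ) ^ i / i.factorial ≤ exp 0.21 :=
    sum_le_exp_of_nonneg (by norm_num) 4
  simp only [sum_range_succ, sum_range_zero, Nat.factorial] at h021
  norm_num at h021
  have he : exp 1.79 * exp 0.21 = exp 1 ^ 2 := by
    rw [← exp_add, sq, ← exp_add]; norm_num
  nlinarith [exp_pos 1.79, exp_pos 1, exp_one_lt_d9]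

theorem exp_le_one_add_add_sq_of_one_le {s : ℝ} (h1 : 1 ≤ s) (h2 : s ≤ 1.79) :
    exp s ≤ 1 + s + s ^ 2 := by
  set g : ℝ → ℝ := fun t => (1 + t + t ^ 2) * exp (-t)
  have hg : ∀ t, HasDerivAt g ((t - t ^ 2) * exp (-t)) t := fun t => by
    have hp : HasDerivAt (fun t : ℝ => 1 + t + t ^ 2) (1 + 2 * t) t := by
      have h1 : HasDerivAt (fun t : ℝ => 1 + t) 1 t := (hasDerivAt_id t).const_add 1
      have h2 : HasDerivAt (fun t : ℝ => t ^ 2) (2 * t) t := by simpa using hasDerivAt_pow 2 t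
      exact h1.add h2
    exact (hp.mul (hasDerivAt_neg t).exp).congr_deriv (by ring)
  have hanti : AntitoneOn g (Set.Ici 1) := by
    refine antitoneOn_of_deriv_nonpos (convex_Ici 1)
      (fun t _ => (hg t).continuousAt.continuousWithinAt)
      (fun t _ => (hg t).differentiableAt.differentiableWithinAt) fun t ht => ?_
    rw [interior_Ici, Set.mem_Ioi] at ht
    rw [(hg t).deriv]
    exact mul_nonpos_of_nonpos_of_nonneg (by nlinarith) (exp_pos _).le
  have hg179 : 1 ≤ g 1.79 := by
    simp only [g, exp_neg]
    rw [← div_eq_mul_inv, one_le_div (exp_pos _)]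
    exact exp_one_point_seven_nine_le
  have hgs : 1 ≤ g s := hg179.trans (hanti h1 (by norm_num : (1:ℝ) ≤ 1.79) h2)
  simp only [g, exp_neg] at hgs
  rwa [← div_eq_mul_inv, one_le_div (exp_pos _)] at hgs

-- `1.79` is close to the largest `s₀` with `exp s ≤ 1 + s + s ^ 2` on `[0, s₀]`.
theorem exp_le_one_add_add_sq {s : ℝ} (hs : s ≤ 1.79) : exp s ≤ 1 + s + s ^ 2 := by
  rcases le_or_gt 1 s with h1 | h1
  · exact exp_le_one_add_add_sq_of_one_le h1 hs
  rcases le_or_gt (-1) s with h0 | h0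
  · have := abs_exp_sub_one_sub_id_le (abs_le.mpr ⟨h0, h1.le⟩)
    nlinarith [le_abs_self (exp s - 1 - s)]
  · have hinv : exp s * (1 - s) ≤ 1 := by
      have := add_one_le_exp (-s)
      rw [exp_neg] at this
      nlinarith [exp_pos s, mul_inv_cancel₀ (exp_pos s).ne']
    nlinarith [exp_pos s]

theorem neg_le_log_one_sub_add_sq {t : ℝ} (ht : -1.79 ≤ t) : -t ≤ log (1 - t + t ^ 2) := by
  rw [le_log_iff_exp_le (by nlinarith [sq_nonneg (t - 1)])]
  have := exp_le_one_add_add_sq (s := -t) (by linarith)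
  linarith [neg_sq t]

noncomputable def dhTerm (a y : ℝ) : ℝ := a * log (a / y) - a + y

theorem Dh_eq_sum_dhTerm {n : ℕ} (z y : Fin n → ℝ) : Dh z y = ∑ i, dhTerm (z i) (y i) := rfl

theorem dhTerm_self (a : ℝ) : dhTerm a a = 0 := by
  rcases eq_or_ne a 0 with rfl | ha <;> simp [dhTerm, *]

-- Squared Hellinger distance is at most the divergence; this bounds both `y` and `√y - √a`.
theorem sq_sqrt_sub_sqrt_le_dhTerm {a y : ℝ} (ha : 0 ≤ a) (hy : 0 < y) :
    (√a - √y) ^ 2 ≤ dhTerm a y := by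
  rw [dhTerm]
  rcases ha.eq_or_lt with rfl | ha
  · simp [sq_sqrt hy.le]
  have hsa := sqrt_pos.mpr ha
  have hsy := sqrt_pos.mpr hy
  have hlog : log (√y / √a) ≤ √y / √a - 1 := log_le_sub_one_of_pos (by positivity)
  have hsplit : log (a / y) = -2 * log (√y / √a) := by
    rw [log_div ha.ne' hy.ne', log_div hsy.ne' hsa.ne', log_sqrt hy.le, log_sqrt ha.le]; ring
  have hmul : a * (√y / √a) = √a * √y := by
    field_simp; rw [sq_sqrt ha.le]
  rw [hsplit]
  nlinarith [sq_sqrt ha.le, sq_sqrt hy.le]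

theorem dhTerm_nonneg {a y : ℝ} (ha : 0 ≤ a) (hy : 0 < y) : 0 ≤ dhTerm a y :=
  (sq_nonneg _).trans (sq_sqrt_sub_sqrt_le_dhTerm ha hy)

theorem le_two_mul_dhTerm_add {a y : ℝ} (ha : 0 ≤ a) (hy : 0 < y) :
    y ≤ 2 * (dhTerm a y + a) := by
  nlinarith [sq_sqrt_sub_sqrt_le_dhTerm ha hy, sq_sqrt ha, sq_sqrt hy.le, sq_nonneg (2 * √a - √y)]

theorem mul_log_div_mul {a y u : ℝ} (hy : 0 < y) (hu : 0 < u) :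
    a * log (a / (y * u)) = a * log (a / y) - a * log u := by
  rcases eq_or_ne a 0 with rfl | ha
  · simp
  rw [log_div ha (by positivity), log_div ha hy.ne', log_mul hy.ne' hu.ne']; ring

theorem continuousAt_dhTerm_self {a : ℝ} (ha : 0 ≤ a) : ContinuousAt (dhTerm a) a := by
  unfold dhTerm
  rcases ha.eq_or_lt with rfl | ha
  · simp only [zero_mul, sub_zero, zero_add]; fun_prop
  · fun_prop (disch := positivity)

theorem one_sub_add_sq_pos (t : ℝ) : 0 < 1 - t + t ^ 2 := by
  nlinarith [sq_nonneg (t - 1 / 2)]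

theorem dhTerm_mul_le {a y t : ℝ} (ha : 0 ≤ a) (hy : 0 < y) (ht : -1.79 ≤ t) :
    dhTerm a (y * (1 - t + t ^ 2)) ≤ dhTerm a y - t * (y - a) + t ^ 2 * y := by
  rw [dhTerm, dhTerm, mul_log_div_mul hy (one_sub_add_sq_pos t)]
  nlinarith [mul_le_mul_of_nonneg_left (neg_le_log_one_sub_add_sq ht) ha]

section Bregman

variable {n : ℕ}

theorem Dh_nonneg {z y : Fin n → ℝ} (hz : ∀ i, 0 ≤ z i) (hy : ∀ i, 0 < y i) : 0 ≤ Dh z y :=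
  sum_nonneg fun i _ => dhTerm_nonneg (hz i) (hy i)

theorem dhTerm_le_Dh {z y : Fin n → ℝ} (hz : ∀ i, 0 ≤ z i) (hy : ∀ i, 0 < y i) (i : Fin n) :
    dhTerm (z i) (y i) ≤ Dh z y :=
  single_le_sum (fun j _ => dhTerm_nonneg (hz j) (hy j)) (mem_univ i)

theorem sum_le_two_mul_Dh_add_sum {z y : Fin n → ℝ} (hz : ∀ i, 0 ≤ z i)
    (hy : ∀ i, 0 < y i) : ∑ i, y i ≤ 2 * (Dh z y + ∑ i, z i) := by
  rw [Dh_eq_sum_dhTerm, ← sum_add_distrib, mul_sum]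
  exact sum_le_sum fun i _ => le_two_mul_dhTerm_add (hz i) (hy i)

theorem Dh_self (z : Fin n → ℝ) : Dh z z = 0 :=
  sum_eq_zero fun i _ => dhTerm_self (z i)

theorem continuousAt_Dh_self {z : Fin n → ℝ} (hz : ∀ i, 0 ≤ z i) : ContinuousAt (Dh z) z :=
  tendsto_finsetSum _ fun i _ =>
    (continuousAt_dhTerm_self (hz i)).tendsto.comp ((continuous_apply i).tendsto z)

theorem tendsto_of_tendsto_Dh_zero {z : Fin n → ℝ} {y : ℕ → Fin n → ℝ} (hz : ∀ i, 0 ≤ z i)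
    (hy : ∀ k i, 0 < y k i) (hD : Tendsto (fun k => Dh z (y k)) atTop (𝓝 0)) :
    Tendsto y atTop (𝓝 z) := by
  refine tendsto_pi_nhds.mpr fun i => ?_
  have hsq : Tendsto (fun k => (√(z i) - √(y k i)) ^ 2) atTop (𝓝 0) :=
    squeeze_zero (fun _ => sq_nonneg _)
      (fun k => (sq_sqrt_sub_sqrt_le_dhTerm (hz i) (hy k i)).trans (dhTerm_le_Dh hz (hy k) i)) hD
  have hsqrt : Tendsto (fun k => √(y k i)) atTop (𝓝 √(z i)) := by
    have habs : Tendsto (fun k => √((√(z i) - √(y k i)) ^ 2)) atTop (𝓝 0) := by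
      simpa using hsq.sqrt
    rw [tendsto_iff_norm_sub_tendsto_zero]
    convert habs using 2 with k
    rw [sqrt_sq_eq_abs, abs_sub_comm, Real.norm_eq_abs]
  simpa [sq_sqrt (hz i), sq_sqrt (hy _ i).le] using hsqrt.pow 2

end Bregman

section Norms

variable {m n : ℕ}

theorem wnormSq_pos {x v : Fin n → ℝ} (hx : ∀ i, 0 < x i) (hv : v ≠ 0) : 0 < wnormSq x v := by
  obtain ⟨i, hi⟩ := Function.ne_iff.mp hv
  exact sum_pos' (fun j _ => mul_nonneg (hx j).le (sq_nonneg _))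
    ⟨i, mem_univ i, mul_pos (hx i) (pow_pos (abs_pos.mpr hi) 2 |>.trans_eq (sq_abs _))⟩

variable [NeZero n]

theorem abs_le_linfty (v : Fin n → ℝ) (i : Fin n) : |v i| ≤ linfty v :=
  le_sup' (fun i => |v i|) (mem_univ i)

theorem linfty_pos {v : Fin n → ℝ} (hv : v ≠ 0) : 0 < linfty v := by
  obtain ⟨i, hi⟩ := Function.ne_iff.mp hv
  exact (abs_pos.mpr hi).trans_le (abs_le_linfty v i)

theorem sum_sq_le_colNormMax_sq (A : Matrix (Fin m) (Fin n) ℝ) (j : Fin n) :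
    ∑ i, A i j ^ 2 ≤ colNormMax A ^ 2 := by
  have hj : √(∑ i, A i j ^ 2) ≤ colNormMax A :=
    le_sup' (fun j => √(∑ i, A i j ^ 2)) (mem_univ j)
  calc ∑ i, A i j ^ 2 = √(∑ i, A i j ^ 2) ^ 2 := (sq_sqrt (by positivity)).symm
    _ ≤ colNormMax A ^ 2 := pow_le_pow_left₀ (sqrt_nonneg _) hj 2

end Norms

section Objective

variable {m n : ℕ} (A : Matrix (Fin m) (Fin n) ℝ) (b : Fin m → ℝ)

theorem fobj_eq_dotProduct (x : Fin n → ℝ) :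
    fobj A b x = 1 / 2 * ((A *ᵥ x - b) ⬝ᵥ (A *ᵥ x - b)) := by
  simp only [fobj, dotProduct, sq]

theorem fobj_nonneg (x : Fin n → ℝ) : 0 ≤ fobj A b x := by
  unfold fobj; positivity

theorem fobj_eq_zero_iff {x : Fin n → ℝ} : fobj A b x = 0 ↔ A *ᵥ x = b := by
  rw [fobj_eq_dotProduct, mul_eq_zero, dotProduct_self_eq_zero, sub_eq_zero]
  norm_num

theorem fobj_pos {x : Fin n → ℝ} (hg : gradf A b x ≠ 0) : 0 < fobj A b x := by
  refine (fobj_nonneg A b x).lt_of_ne' fun hf => hg ?_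
  rw [gradf, (fobj_eq_zero_iff A b).mp hf, sub_self, mulVec_zero]

theorem continuous_fobj : Continuous (fobj A b) := by
  unfold fobj; fun_prop

theorem gradf_dotProduct_sub {x z : Fin n → ℝ} (hz : A *ᵥ z = b) :
    gradf A b x ⬝ᵥ (x - z) = 2 * fobj A b x := by
  rw [gradf, mulVec_transpose, ← dotProduct_mulVec, mulVec_sub, hz,
    fobj_eq_dotProduct]
  ring

theorem sq_gradf_le [NeZero n] (x : Fin n → ℝ) (j : Fin n) :
    gradf A b x j ^ 2 ≤ 2 * colNormMax A ^ 2 * fobj A b x := by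
  have hgj : gradf A b x j = ∑ i, A i j * (A *ᵥ x - b) i := by
    simp [gradf, Matrix.mulVec, dotProduct]
  calc gradf A b x j ^ 2 ≤ (∑ i, A i j ^ 2) * ∑ i, (A *ᵥ x - b) i ^ 2 :=
        hgj ▸ sum_mul_sq_le_sq_mul_sq _ _ _
    _ ≤ colNormMax A ^ 2 * ∑ i, (A *ᵥ x - b) i ^ 2 :=
        mul_le_mul_of_nonneg_right (sum_sq_le_colNormMax_sq A j) (by positivity)
    _ = 2 * colNormMax A ^ 2 * fobj A b x := by rw [fobj]; ring

theorem wnormSq_gradf_le [NeZero n] {x : Fin n → ℝ} (hx : ∀ i, 0 ≤ x i) :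
    wnormSq x (gradf A b x) ≤ 2 * colNormMax A ^ 2 * (∑ i, x i) * fobj A b x := by
  calc wnormSq x (gradf A b x) ≤ ∑ i, x i * (2 * colNormMax A ^ 2 * fobj A b x) :=
        sum_le_sum fun i _ => mul_le_mul_of_nonneg_left (sq_gradf_le A b x i) (hx i)
    _ = 2 * colNormMax A ^ 2 * (∑ i, x i) * fobj A b x := by rw [← sum_mul]; ring

theorem sq_linfty_gradf_le [NeZero n] (x : Fin n → ℝ) :
    linfty (gradf A b x) ^ 2 ≤ 2 * colNormMax A ^ 2 * fobj A b x := by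
  obtain ⟨j, -, hj⟩ := exists_mem_eq_sup' univ_nonempty fun i => |gradf A b x i|
  rw [linfty, hj, sq_abs]
  exact sq_gradf_le A b x j

end Objective

section Step

variable {m n : ℕ} [NeZero n] (A : Matrix (Fin m) (Fin n) ℝ) (b : Fin m → ℝ)

noncomputable def hadamardStep (x : Fin n → ℝ) : Fin n → ℝ := fun i =>
  x i * (1 - polyakStep A b x * gradf A b x i + (polyakStep A b x * gradf A b x i) ^ 2)

variable {A b} {x : Fin n → ℝ}

theorem hadamardStep_pos (hx : ∀ i, 0 < x i) (i : Fin n) : 0 < hadamardStep A b x i :=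
  mul_pos (hx i) (one_sub_add_sq_pos _)

theorem polyakStep_pos (hx : ∀ i, 0 < x i) (hg : gradf A b x ≠ 0) : 0 < polyakStep A b x :=
  lt_min (div_pos (fobj_pos A b hg) (wnormSq_pos hx hg))
    (div_pos (by norm_num) (linfty_pos hg))

theorem polyakStep_mul_wnormSq_le (hx : ∀ i, 0 < x i) (hg : gradf A b x ≠ 0) :
    polyakStep A b x * wnormSq x (gradf A b x) ≤ fobj A b x :=
  (le_div_iff₀ (wnormSq_pos hx hg)).mp (min_le_left _ _)

theorem neg_le_polyakStep_mul_gradf (hx : ∀ i, 0 < x i) (hg : gradf A b x ≠ 0) (i : Fin n) :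
    -1.79 ≤ polyakStep A b x * gradf A b x i := by
  have hα := polyakStep_pos hx hg
  have hαℓ : polyakStep A b x * linfty (gradf A b x) ≤ 1.79 :=
    (le_div_iff₀ (linfty_pos hg)).mp (min_le_right _ _)
  nlinarith [mul_le_mul_of_nonneg_left (abs_le_linfty (gradf A b x) i) hα.le,
    neg_abs_le (gradf A b x i)]

theorem Dh_hadamardStep_le {z : Fin n → ℝ} (hz : ∀ i, 0 ≤ z i) (hzb : A *ᵥ z = b)
    (hx : ∀ i, 0 < x i) (hg : gradf A b x ≠ 0) :
    Dh z (hadamardStep A b x) ≤ Dh z x - polyakStep A b x * fobj A b x := by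
  set α := polyakStep A b x
  set g := gradf A b x
  calc Dh z (hadamardStep A b x)
      ≤ ∑ i, (dhTerm (z i) (x i) - α * g i * (x i - z i) + (α * g i) ^ 2 * x i) :=
        sum_le_sum fun i _ =>
          dhTerm_mul_le (hz i) (hx i) (neg_le_polyakStep_mul_gradf hx hg i)
    _ = Dh z x - α * (g ⬝ᵥ (x - z)) + α * (α * wnormSq x g) := by
        rw [Dh_eq_sum_dhTerm, wnormSq, dotProduct, mul_sum, mul_sum, mul_sum,
          ← sum_sub_distrib, ← sum_add_distrib]
        exact sum_congr rfl fun i _ => by simp only [Pi.sub_apply]; ring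
    _ ≤ Dh z x - α * fobj A b x := by
        rw [gradf_dotProduct_sub A b hzb]
        nlinarith [mul_le_mul_of_nonneg_left (polyakStep_mul_wnormSq_le hx hg)
          (polyakStep_pos hx hg).le]

theorem fobj_le_max {M : ℝ} (hx : ∀ i, 0 < x i) (hg : gradf A b x ≠ 0) (hM : ∑ i, x i ≤ M) :
    fobj A b x ≤ 2 * colNormMax A ^ 2 *
      max (M * (polyakStep A b x * fobj A b x)) ((polyakStep A b x * fobj A b x) ^ 2) := by
  set u := polyakStep A b x * fobj A b x with hu_def
  have hu : 0 < u := mul_pos (polyakStep_pos hx hg) (fobj_pos A b hg)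
  have hC : 0 ≤ 2 * colNormMax A ^ 2 := by positivity
  obtain hα | hα : polyakStep A b x = fobj A b x / wnormSq x (gradf A b x) ∨
      polyakStep A b x = 1.79 / linfty (gradf A b x) := min_choice _ _
  · have huw : u * wnormSq x (gradf A b x) = fobj A b x * fobj A b x := by
      rw [hu_def, hα]; field_simp [(wnormSq_pos hx hg).ne']
    have hwM : wnormSq x (gradf A b x) ≤ 2 * colNormMax A ^ 2 * M * fobj A b x :=
      (wnormSq_gradf_le A b fun i => (hx i).le).trans (by gcongr; exact fobj_nonneg A b x)
    refine le_mul_of_le_mul_of_nonneg_left ?_ (le_max_left _ _) hC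
    nlinarith [mul_le_mul_of_nonneg_left hwM hu.le, fobj_pos A b hg]
  · have huℓ : u * linfty (gradf A b x) = 1.79 * fobj A b x := by
      rw [hu_def, hα]; field_simp [(linfty_pos hg).ne']
    refine le_mul_of_le_mul_of_nonneg_left ?_ (le_max_right _ _) hC
    nlinarith [mul_le_mul_of_nonneg_left (sq_linfty_gradf_le A b x) (sq_nonneg u),
      fobj_pos A b hg]

end Step

structure IsHadamardDescentPlus {m n : ℕ} [NeZero n] (A : Matrix (Fin m) (Fin n) ℝ)
    (b : Fin m → ℝ) (x : ℕ → Fin n → ℝ) : Prop where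
  pos_zero : ∀ i, 0 < x 0 i
  gradf_ne_zero : ∀ k, gradf A b (x k) ≠ 0
  succ_eq : ∀ k, x (k + 1) = hadamardStep A b (x k)

namespace IsHadamardDescentPlus

variable {m n : ℕ} [NeZero n] {A : Matrix (Fin m) (Fin n) ℝ} {b : Fin m → ℝ}
  {x : ℕ → Fin n → ℝ} {z : Fin n → ℝ}

theorem pos (hx : IsHadamardDescentPlus A b x) : ∀ k i, 0 < x k i
  | 0 => hx.pos_zero
  | k + 1 => by rw [hx.succ_eq]; exact hadamardStep_pos (hx.pos k)

theorem polyakStep_mul_fobj_pos (hx : IsHadamardDescentPlus A b x) (k : ℕ) :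
    0 < polyakStep A b (x k) * fobj A b (x k) :=
  mul_pos (polyakStep_pos (hx.pos k) (hx.gradf_ne_zero k)) (fobj_pos A b (hx.gradf_ne_zero k))

theorem Dh_succ_le (hx : IsHadamardDescentPlus A b x) (hz : ∀ i, 0 ≤ z i) (hzb : A *ᵥ z = b)
    (k : ℕ) : Dh z (x (k + 1)) ≤ Dh z (x k) - polyakStep A b (x k) * fobj A b (x k) :=
  hx.succ_eq k ▸ Dh_hadamardStep_le hz hzb (hx.pos k) (hx.gradf_ne_zero k)

theorem antitone_Dh (hx : IsHadamardDescentPlus A b x) (hz : ∀ i, 0 ≤ z i)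
    (hzb : A *ᵥ z = b) : Antitone fun k => Dh z (x k) :=
  antitone_nat_of_succ_le fun k => by
    linarith [hx.Dh_succ_le hz hzb k, hx.polyakStep_mul_fobj_pos k]

theorem sum_polyakStep_mul_fobj_le (hx : IsHadamardDescentPlus A b x) (hz : ∀ i, 0 ≤ z i)
    (hzb : A *ᵥ z = b) (K : ℕ) :
    ∑ k ∈ range K, polyakStep A b (x k) * fobj A b (x k) ≤ Dh z (x 0) := by
  have htelescope : ∀ K, ∑ k ∈ range K, polyakStep A b (x k) * fobj A b (x k) ≤
      Dh z (x 0) - Dh z (x K) := by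
    intro K
    induction K with
    | zero => simp
    | succ K ih => rw [sum_range_succ]; linarith [hx.Dh_succ_le hz hzb K]
  linarith [htelescope K, Dh_nonneg hz (hx.pos K)]

theorem sum_le (hx : IsHadamardDescentPlus A b x) (hz : ∀ i, 0 ≤ z i) (hzb : A *ᵥ z = b)
    (k : ℕ) : ∑ i, x k i ≤ 2 * (Dh z (x 0) + ∑ i, z i) := by
  linarith [sum_le_two_mul_Dh_add_sum hz (hx.pos k), hx.antitone_Dh hz hzb (Nat.zero_le k)]

theorem tendsto_fobj (hx : IsHadamardDescentPlus A b x) (hz : ∀ i, 0 ≤ z i)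
    (hzb : A *ᵥ z = b) : Tendsto (fun k => fobj A b (x k)) atTop (𝓝 0) := by
  have hu : Tendsto (fun k => polyakStep A b (x k) * fobj A b (x k)) atTop (𝓝 0) :=
    (summable_of_sum_range_le (fun k => (hx.polyakStep_mul_fobj_pos k).le)
      (hx.sum_polyakStep_mul_fobj_le hz hzb)).tendsto_atTop_zero
  have hbound := (((hu.const_mul (2 * (Dh z (x 0) + ∑ i, z i))).max (hu.pow 2)).const_mul
    (2 * colNormMax A ^ 2))
  simp only [mul_zero, ne_eq, OfNat.ofNat_ne_zero, not_false_eq_true, zero_pow, max_self]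
    at hbound
  exact squeeze_zero (fun k => fobj_nonneg A b _)
    (fun k => fobj_le_max (hx.pos k) (hx.gradf_ne_zero k) (hx.sum_le hz hzb k)) hbound

theorem exists_tendsto (hx : IsHadamardDescentPlus A b x) (hz : ∀ i, 0 ≤ z i)
    (hzb : A *ᵥ z = b) :
    ∃ xstar : Fin n → ℝ, (∀ i, 0 ≤ xstar i) ∧ A *ᵥ xstar = b ∧ Tendsto x atTop (𝓝 xstar) := by
  have hmem : ∀ k, x k ∈ Set.Icc 0 fun _ => 2 * (Dh z (x 0) + ∑ i, z i) := fun k =>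
    ⟨fun i => (hx.pos k i).le, fun i =>
      (single_le_sum (fun j _ => (hx.pos k j).le) (mem_univ i)).trans (hx.sum_le hz hzb k)⟩
  obtain ⟨xstar, hmem, φ, hφ, hlim⟩ := isCompact_Icc.tendsto_subseq hmem
  have hxstar : ∀ i, 0 ≤ xstar i := hmem.1
  have hAxstar : A *ᵥ xstar = b := (fobj_eq_zero_iff A b).mp <|
    tendsto_nhds_unique ((continuous_fobj A b).tendsto xstar |>.comp hlim)
      ((hx.tendsto_fobj hz hzb).comp hφ.tendsto_atTop)
  have hsub : Tendsto (Dh xstar ∘ x ∘ φ) atTop (𝓝 0) :=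
    Dh_self xstar ▸ (continuousAt_Dh_self hxstar).tendsto.comp hlim
  have hD : Tendsto (fun k => Dh xstar (x k)) atTop (𝓝 0) :=
    (tendsto_iff_tendsto_subseq_of_antitone (hx.antitone_Dh hxstar hAxstar)
      hφ.tendsto_atTop).mpr hsub
  exact ⟨xstar, hxstar, hAxstar, tendsto_of_tendsto_Dh_zero hxstar hx.pos hD⟩

theorem inf'_fobj_le (hx : IsHadamardDescentPlus A b x) (hz : ∀ i, 0 ≤ z i)
    (hzb : A *ᵥ z = b) (k : ℕ) :
    (range (k + 1)).inf' nonempty_range_add_one (fun i => fobj A b (x i)) ≤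
      4 * Dh z (x 0) * (Dh z (x 0) + l1 z) * colNormMax A ^ 2 / (k + 1) := by
  set R := Dh z (x 0)
  have hR : 0 ≤ R := Dh_nonneg hz hx.pos_zero
  have hl1 : l1 z = ∑ i, z i := sum_congr rfl fun i _ => abs_of_nonneg (hz i)
  have hl1_nonneg : 0 ≤ l1 z := sum_nonneg fun i _ => abs_nonneg (z i)
  have hk : (0 : ℝ) < k + 1 := by positivity
  obtain ⟨i, hi, hui⟩ : ∃ i ∈ range (k + 1),
      polyakStep A b (x i) * fobj A b (x i) ≤ R / (k + 1) := by
    refine exists_le_of_sum_le nonempty_range_add_one ?_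
    rw [sum_const, card_range, nsmul_eq_mul, Nat.cast_add_one, mul_div_cancel₀ _ hk.ne']
    exact hx.sum_polyakStep_mul_fobj_le hz hzb (k + 1)
  set u := polyakStep A b (x i) * fobj A b (x i)
  have hRM : R / (k + 1) ≤ 2 * (R + l1 z) := (div_le_self hR (by linarith)).trans (by linarith)
  have hmax : max (2 * (R + l1 z) * u) (u ^ 2) ≤ 2 * (R + l1 z) * (R / (k + 1)) :=
    max_le (mul_le_mul_of_nonneg_left hui (by positivity))
      (by nlinarith [(hx.polyakStep_mul_fobj_pos i).le])
  calc (range (k + 1)).inf' nonempty_range_add_one (fun i => fobj A b (x i))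
      ≤ fobj A b (x i) := inf'_le _ hi
    _ ≤ 2 * colNormMax A ^ 2 * max (2 * (R + l1 z) * u) (u ^ 2) :=
        fobj_le_max (hx.pos i) (hx.gradf_ne_zero i) (hl1 ▸ hx.sum_le hz hzb i)
    _ ≤ 2 * colNormMax A ^ 2 * (2 * (R + l1 z) * (R / (k + 1))) := by gcongr
    _ = 4 * R * (R + l1 z) * colNormMax A ^ 2 / (k + 1) := by ring

end IsHadamardDescentPlus

theorem hadamard_descent_plus_convergence_general {m n : ℕ} [NeZero n]
    (A : Matrix (Fin m) (Fin n) ℝ) (b : Fin m → ℝ)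
    (hS : ∃ z : Fin n → ℝ, (∀ i, 0 ≤ z i) ∧ A.mulVec z = b)
    (x : ℕ → Fin n → ℝ) (hx0 : ∀ i, 0 < x 0 i)
    (hgrad : ∀ k, gradf A b (x k) ≠ 0)
    (hrec : ∀ k i, x (k + 1) i =
      x k i * (1 - (polyakStep A b (x k)) * gradf A b (x k) i
        + (polyakStep A b (x k)) ^ 2 * (gradf A b (x k) i) ^ 2)) :
    ∃ xstar : Fin n → ℝ, (∀ i, 0 ≤ xstar i) ∧ A.mulVec xstar = b ∧
      Filter.Tendsto x Filter.atTop (nhds xstar) ∧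
      ∀ k : ℕ, (Finset.range (k + 1)).inf' Finset.nonempty_range_add_one
          (fun i => fobj A b (x i)) ≤
        4 * Dh xstar (x 0) * (Dh xstar (x 0) + l1 xstar) * (colNormMax A) ^ 2 / (k + 1) := by
  have hx : IsHadamardDescentPlus A b x :=
    ⟨hx0, hgrad, fun k => funext fun i => by rw [hrec, hadamardStep, mul_pow]⟩
  obtain ⟨z, hz, hzb⟩ := hS
  obtain ⟨xstar, hxstar, hAxstar, hlim⟩ := hx.exists_tendsto hz hzb
  exact ⟨xstar, hxstar, hAxstar, hlim, hx.inf'_fobj_le hxstar hAxstar⟩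

/-- Convergence of Hadamard descent+: if `S₊ ≠ ∅`, `x₀ ∈ ℝⁿ₊₊` and
`x_{k+1} = x_k ∘ (1 - α_k ∇f(x_k) + α_k² ∇f(x_k)²)` with the Polyak-type
stepsize `α_k`, then `(x_k)` converges to some `x* ∈ S₊` and
`min_{0 ≤ i ≤ k} f(x_i) ≤ 4 R (R + ‖x*‖₁) C_A² / (k+1)` where `R = D_h(x*, x₀)`. -/
theorem hadamard_descent_plus_convergence {m n : ℕ} [NeZero n]
    (A : Matrix (Fin m) (Fin n) ℝ) (hA : A ≠ 0) (b : Fin m → ℝ)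
    (hS : ∃ z : Fin n → ℝ, (∀ i, 0 ≤ z i) ∧ A.mulVec z = b)
    (x : ℕ → Fin n → ℝ) (hx0 : ∀ i, 0 < x 0 i)
    (hgrad : ∀ k, gradf A b (x k) ≠ 0)
    (hrec : ∀ k i, x (k + 1) i =
      x k i * (1 - (polyakStep A b (x k)) * gradf A b (x k) i
        + (polyakStep A b (x k)) ^ 2 * (gradf A b (x k) i) ^ 2)) :
    ∃ xstar : Fin n → ℝ, (∀ i, 0 ≤ xstar i) ∧ A.mulVec xstar = b ∧
      Filter.Tendsto x Filter.atTop (nhds xstar) ∧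
      ∀ k : ℕ, (Finset.range (k + 1)).inf' Finset.nonempty_range_add_one
          (fun i => fobj A b (x i)) ≤
        4 * Dh xstar (x 0) * (Dh xstar (x 0) + l1 xstar) * (colNormMax A) ^ 2 / (k + 1) :=
  hadamard_descent_plus_convergence_general A b hS x hx0 hgrad hrec
end

section
/- (Improved implicit-bias bound) Let A ∈ ℝ^{m×n}, b ∈ ℝ^m, n ≥ 2, η ∈ ℝ, and x₀ = e^{−η}·1 ∈ ℝ^n. Let z ∈ S₊ be an ℓ₁-minimal solution, i.e. ‖z‖₁ ≤ ‖s‖₁ for all s ∈ S₊, with ‖x₀‖₁ = n·e^{−η} < ‖z‖₁. Let x ∈ ℝ^n_{++} ∩ S₊ satisfy ⟨log x + η·1, z′ − x⟩ = 0 for all z′ ∈ S₊. If w ≥ 0 satisfies w·e^w = (n−1)/e, then ‖x‖₁ − ‖z‖₁ ≤ ‖z‖₁ · w / ( η + log(‖x‖₁/n) ). -/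
/-!
Write `S = ‖x‖₁`, `Z = ‖z‖₁`, `L = log (S / n)` and let `M` be the largest coordinate of `x`.
Testing the orthogonality condition against `z` gives
`η (S - Z) = ∑ z log x - ∑ x log x ≤ Z log M - ∑ x log x`.
The entropy `∑ x log x` is bounded below in two ways: by `S L` (Jensen), and by `S (log M - w)`
(Jensen on the other `n - 1` coordinates, then Fenchel–Young, where the Lambert equation for `w`
makes the error term exactly `M w`). The first bound settles the case `log M ≤ w + L`, the second,
together with `Z ≤ S` from ℓ₁-minimality, the case `log M > w + L`. Finally `η + L > 0` because
`S ≥ Z > n e^{-η}`.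
-/

open Finset Filter

open Real

lemma l1_eq_sum {n : ℕ} {x : Fin n → ℝ} (hx : ∀ i, 0 ≤ x i) : l1 x = ∑ i, x i :=
  sum_congr rfl fun i _ => abs_of_nonneg (hx i)

/-- Fenchel–Young inequality for `a ↦ a log a`, whose convex conjugate is `t ↦ exp (t - 1)`. -/
lemma mul_le_mul_log_add_exp {a : ℝ} (ha : 0 ≤ a) (t : ℝ) : a * t ≤ a * log a + exp (t - 1) := by
  rcases ha.eq_or_lt with rfl | ha
  · simpa using (exp_pos _).le
  have h := log_le_sub_one_of_pos (div_pos (exp_pos (t - 1)) ha)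
  rw [log_div (exp_pos _).ne' ha.ne', log_exp, le_sub_iff_add_le, le_div_iff₀ ha] at h
  linarith

lemma sum_mul_log_div_card_le {ι : Type*} (s : Finset ι) (f : ι → ℝ) (hf : ∀ i ∈ s, 0 ≤ f i) :
    (∑ i ∈ s, f i) * log ((∑ i ∈ s, f i) / #s) ≤ ∑ i ∈ s, f i * log (f i) := by
  rcases s.eq_empty_or_nonempty with rfl | hs
  · simp
  have hk : (0 : ℝ) < #s := by exact_mod_cast hs.card_pos
  have h := convexOn_mul_log.map_sum_le (t := s) (w := fun _ => (#s : ℝ)⁻¹) (p := f)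
    (fun _ _ => by positivity) (by simp [hk.ne']) hf
  simp only [smul_eq_mul, ← mul_sum] at h
  rw [inv_mul_eq_div] at h
  have := mul_le_mul_of_nonneg_left h hk.le
  rwa [← mul_assoc, ← mul_assoc, mul_div_cancel₀ _ hk.ne', mul_inv_cancel₀ hk.ne', one_mul] at this

lemma mul_exp_neg_one_add_eq_of_mul_exp_eq {w c : ℝ} (hw : w * exp w = c / exp 1) :
    c * exp (-(1 + w)) = w := by
  rw [exp_neg, exp_add, eq_div_iff (exp_pos 1).ne'] at *
  field_simp
  linarith

lemma sum_mul_sub_le_sum_mul_log {ι : Type*} [Fintype ι] [DecidableEq ι]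
    (hι : 1 < Fintype.card ι) {x : ι → ℝ} (hx : ∀ i, 0 < x i) (i₀ : ι) {w : ℝ}
    (hw : ((Fintype.card ι : ℝ) - 1) * exp (-(1 + w)) = w) :
    (∑ i, x i) * (log (x i₀) - w) ≤ ∑ i, x i * log (x i) := by
  have hk_eq : ((univ.erase i₀).card : ℝ) = Fintype.card ι - 1 := by
    rw [card_erase_of_mem (mem_univ _), card_univ, Nat.cast_sub hι.le, Nat.cast_one]
  have hrest : (univ.erase i₀).Nonempty :=
    card_pos.mp (by rw [card_erase_of_mem (mem_univ _), card_univ]; omega)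
  set rest := univ.erase i₀
  set R := ∑ i ∈ rest, x i
  set k : ℝ := (rest.card : ℝ)
  have hk : 0 < k := by rw [hk_eq, sub_pos]; exact_mod_cast hι
  have hR : 0 < R := sum_pos (fun i _ => hx i) hrest
  have hx₀ := hx i₀
  have hsum : x i₀ + R = ∑ i, x i := add_sum_erase _ _ (mem_univ i₀)
  have hsum_log : x i₀ * log (x i₀) + ∑ i ∈ rest, x i * log (x i) = ∑ i, x i * log (x i) :=
    add_sum_erase _ (fun i => x i * log (x i)) (mem_univ i₀)
  have hjensen : R * log (R / k) ≤ ∑ i ∈ rest, x i * log (x i) :=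
    sum_mul_log_div_card_le rest x fun i _ => (hx i).le
  have hfenchel := mul_le_mul_log_add_exp hR.le (log (k * x i₀) - w)
  have hexp : exp (log (k * x i₀) - w - 1) = x i₀ * w := by
    rw [show log (k * x i₀) - w - 1 = log (k * x i₀) + -(1 + w) by ring, exp_add,
      exp_log (by positivity), hk_eq]
    linear_combination x i₀ * hw
  rw [hexp, log_mul hk.ne' hx₀.ne'] at hfenchel
  rw [log_div hR.ne' hk.ne'] at hjensen
  rw [← hsum, ← hsum_log]
  linarith

lemma sum_mul_log_le_of_le {ι : Type*} (s : Finset ι) {x y : ι → ℝ} {M : ℝ}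
    (hy : ∀ i ∈ s, 0 ≤ y i) (hx : ∀ i ∈ s, 0 < x i) (hxM : ∀ i ∈ s, x i ≤ M) :
    ∑ i ∈ s, y i * log (x i) ≤ (∑ i ∈ s, y i) * log M := by
  rw [sum_mul]
  exact sum_le_sum fun i hi => mul_le_mul_of_nonneg_left (log_le_log (hx i hi) (hxM i hi)) (hy i hi)

theorem improved_implicit_bias_bound_general {m n : ℕ} (hn : 2 ≤ n)
    (A : Matrix (Fin m) (Fin n) ℝ) (b : Fin m → ℝ) (η : ℝ)
    (z : Fin n → ℝ) (hz : ∀ i, 0 ≤ z i) (hzsol : A.mulVec z = b)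
    (hzmin : ∀ s : Fin n → ℝ, (∀ i, 0 ≤ s i) → A.mulVec s = b → l1 z ≤ l1 s)
    (hsmall : (n : ℝ) * Real.exp (-η) < l1 z)
    (x : Fin n → ℝ) (hx : ∀ i, 0 < x i) (hxsol : A.mulVec x = b)
    (horth : ∀ z' : Fin n → ℝ, (∀ i, 0 ≤ z' i) → A.mulVec z' = b →
      ∑ i, (Real.log (x i) + η) * (z' i - x i) = 0)
    (w : ℝ) (hweq : w * Real.exp w = ((n : ℝ) - 1) / Real.exp 1) :
    l1 x - l1 z ≤ l1 z * w / (η + Real.log (l1 x / n)) := by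
  have hZS := hzmin x (fun i => (hx i).le) hxsol
  rw [l1_eq_sum fun i => (hx i).le, l1_eq_sum hz] at *
  set S := ∑ i, x i
  set Z := ∑ i, z i
  have hn0 : (0 : ℝ) < n := Nat.cast_pos.mpr (by omega)
  have hS : 0 < S := sum_pos (fun i _ => hx i) ⟨⟨0, by omega⟩, mem_univ _⟩
  have hD : 0 < η + log (S / n) := by
    rw [← neg_lt_iff_pos_add', lt_log_iff_exp_lt (div_pos hS hn0), lt_div_iff₀ hn0]
    linarith
  obtain ⟨i₀, -, hmax⟩ := exists_max_image univ x ⟨⟨0, by omega⟩, mem_univ _⟩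
  have hbalance : ∑ i, z i * log (x i) - ∑ i, x i * log (x i) = η * (S - Z) := by
    have h := horth z hz hzsol
    simp only [add_mul, mul_sub, sum_add_distrib, sum_sub_distrib, ← mul_sum,
      mul_comm (log (x _))] at h
    linear_combination h
  have hcross := sum_mul_log_le_of_le univ (fun i _ => hz i) (fun i _ => hx i) hmax
  have hjensen := sum_mul_log_div_card_le univ x fun i _ => (hx i).le
  rw [card_univ, Fintype.card_fin] at hjensen
  have hlambert := sum_mul_sub_le_sum_mul_log (by rw [Fintype.card_fin]; omega) hx i₀
    (by simpa using mul_exp_neg_one_add_eq_of_mul_exp_eq hweq)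
  rw [le_div_iff₀ hD]
  rcases le_or_gt (log (x i₀)) (w + log (S / n)) with hc | hc
  · linarith [mul_le_mul_of_nonneg_left hc (Fintype.sum_nonneg hz)]
  · linarith [mul_le_mul_of_nonneg_left hc.le (sub_nonneg.mpr hZS)]

/-- Improved implicit-bias bound: let `n ≥ 2`, `x₀ = e^{-η} 𝟏`, let `z ∈ S₊`
be ℓ₁-minimal with `‖x₀‖₁ = n e^{-η} < ‖z‖₁`, and let `x ∈ ℝⁿ₊₊ ∩ S₊` satisfy
`⟨log x + η 𝟏, z' - x⟩ = 0` for all `z' ∈ S₊`. If `w ≥ 0` satisfies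
`w e^w = (n-1)/e` (i.e. `w = W₀((n-1)/e)`), then
`‖x‖₁ - ‖z‖₁ ≤ ‖z‖₁ w / (η + log(‖x‖₁/n))`. -/
theorem improved_implicit_bias_bound {m n : ℕ} (hn : 2 ≤ n)
    (A : Matrix (Fin m) (Fin n) ℝ) (b : Fin m → ℝ) (η : ℝ)
    (z : Fin n → ℝ) (hz : ∀ i, 0 ≤ z i) (hzsol : A.mulVec z = b)
    (hzmin : ∀ s : Fin n → ℝ, (∀ i, 0 ≤ s i) → A.mulVec s = b → l1 z ≤ l1 s)
    (hsmall : (n : ℝ) * Real.exp (-η) < l1 z)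
    (x : Fin n → ℝ) (hx : ∀ i, 0 < x i) (hxsol : A.mulVec x = b)
    (horth : ∀ z' : Fin n → ℝ, (∀ i, 0 ≤ z' i) → A.mulVec z' = b →
      ∑ i, (Real.log (x i) + η) * (z' i - x i) = 0)
    (w : ℝ) (hw : 0 ≤ w) (hweq : w * Real.exp w = ((n : ℝ) - 1) / Real.exp 1) :
    l1 x - l1 z ≤ l1 z * w / (η + Real.log (l1 x / n)) :=
  improved_implicit_bias_bound_general hn A b η z hz hzsol hzmin hsmall x hx hxsol horth w hweq
end
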